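/- arXiv:0908.1163 — 4 statements merged into one kernel-verified Lean document; each statement's English description precedes it below -/
import Mathlib

section
/- Let N₁, N₂ be powers of 2 with 8 ≤ N₁ ≤ N₂, let k = N₂/N₁, and let r = 2·cos(π(4k-1)/(2N₂)). Then the chord of angle 2π/N₂ on the circle of radius r is at least 4·sin(π/(2N₂))·sin(2π/N₁), i.e. 2·r·sin(π/N₂) ≥ 4·sin(π/(2N₂))·sin(2π/N₁). -/
open Real

/-- For powers of two `8 ≤ N₁ ≤ N₂` and `k = N₂/N₁`, the chord of
angle `2π/N₂` on the circle of radius `r = 2·cos(π(4k-1)/(2N₂))`, namely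
`2·r·sin(π/N₂)`, is at least `4·sin(π/(2N₂))·sin(2π/N₁)`. -/
theorem stmt_4 (N₁ N₂ u₁ u₂ : ℕ) (h1 : N₁ = 2 ^ u₁) (h2 : N₂ = 2 ^ u₂)
    (h8 : 8 ≤ N₁) (hle : N₁ ≤ N₂) (k : ℕ) (hk : k = N₂ / N₁) :
    4 * sin (π / (2 * N₂)) * sin (2 * π / N₁) ≤
      2 * (2 * cos (π * (4 * k - 1) / (2 * N₂))) * sin (π / N₂) := by
  have hu : u₁ ≤ u₂ := by
    have := hle; rw [h1, h2] at this
    exact (Nat.pow_le_pow_iff_right (by norm_num)).mp this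
  have hkN : N₂ = k * N₁ := by
    subst h1 h2 hk
    rw [Nat.pow_div hu (by norm_num), ← pow_add]
    congr 1; omega
  have hk1 : 1 ≤ k := by
    rcases Nat.eq_zero_or_pos k with h | h
    · simp [h] at hkN; omega
    · exact h
  have h8' : (8:ℝ) ≤ N₁ := by exact_mod_cast h8
  have h8₂ : (8:ℝ) ≤ N₂ := by
    have : (8:ℕ) ≤ N₂ := le_trans h8 hle
    exact_mod_cast this
  have hN2pos : (0:ℝ) < N₂ := by linarith
  have hpi := Real.pi_pos
  set A := π / (2 * N₂) with hA
  set θ := π * (4 * (k:ℝ) - 1) / (2 * N₂) with hθ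
  have hk1' : (1:ℝ) ≤ k := by exact_mod_cast hk1
  have hkN' : (N₂:ℝ) = k * N₁ := by exact_mod_cast hkN
  have hApos : 0 ≤ A := by positivity
  have hA4 : A ≤ π / 4 := by
    rw [hA, div_le_div_iff₀ (by linarith) (by norm_num)]
    nlinarith
  have hθ0 : 0 ≤ θ := by
    rw [hθ]
    apply div_nonneg _ (by linarith)
    nlinarith
  have hθ4 : θ ≤ π / 4 := by
    rw [hθ, div_le_div_iff₀ (by linarith) (by norm_num)]
    have h : (4 * (k:ℝ) - 1) * 4 ≤ 2 * N₂ := by nlinarith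
    nlinarith [mul_le_mul_of_nonneg_left h hpi.le]
  have hcosA : Real.sqrt 2 / 2 ≤ cos A := by
    have := Real.cos_pi_div_four
    calc Real.sqrt 2 / 2 = cos (π/4) := this.symm
      _ ≤ cos A := Real.cos_le_cos_of_nonneg_of_le_pi hApos (by linarith) hA4
  have hcosθ : Real.sqrt 2 / 2 ≤ cos θ := by
    have := Real.cos_pi_div_four
    calc Real.sqrt 2 / 2 = cos (π/4) := this.symm
      _ ≤ cos θ := Real.cos_le_cos_of_nonneg_of_le_pi hθ0 (by linarith) hθ4
  have hsinA : 0 ≤ sin A := Real.sin_nonneg_of_nonneg_of_le_pi hApos (by nlinarith)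
  have hsin1 : sin (2 * π / N₁) ≤ 1 := Real.sin_le_one _
  have hdouble : sin (π / N₂) = 2 * sin A * cos A := by
    have : π / N₂ = 2 * A := by rw [hA]; field_simp
    rw [this, Real.sin_two_mul]
  have hsq : Real.sqrt 2 * Real.sqrt 2 = 2 := Real.mul_self_sqrt (by norm_num)
  have hs2 : (0:ℝ) ≤ Real.sqrt 2 / 2 := by positivity
  have hprod : (Real.sqrt 2 / 2) * (Real.sqrt 2 / 2) ≤ cos A * cos θ :=
    mul_le_mul hcosA hcosθ hs2 (le_trans hs2 hcosA)
  have hhalf : (Real.sqrt 2 / 2) * (Real.sqrt 2 / 2) = 1/2 := by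
    rw [div_mul_div_comm, hsq]; norm_num
  have key : sin (2 * π / N₁) ≤ 2 * cos A * cos θ := by
    have : (1:ℝ) ≤ 2 * (cos A * cos θ) := by linarith [hprod]
    linarith
  rw [hdouble]
  have hfin := mul_le_mul_of_nonneg_left key hsinA
  nlinarith [hfin]
end

section
/- The sum alphabet S_sum = {x(n₁) + x'(n₂) : 0 ≤ n₁ < N₁, 0 ≤ n₂ < N₂} equals the set {x(n₁) + x'(k n₁ + m) : 0 ≤ n₁ < N₁, 0 ≤ m ≤ N₂/2 - 1} ∪ {x(n₁) + x'(k n₁ - m - 1) : 0 ≤ n₁ < N₁, 0 ≤ m ≤ N₂/2 - 1}, i.e., S_sum is contained in the union of N₂/2 concentric circles of radii 2cos(π(2m+1)/(2N₂)). -/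
/-!
Write `x n₁ = e^{2πi n₁/N₁} = e^{2πi k n₁/N₂}` and `x' n = e^{iπ(2n+1)/N₂}`, which depends only on
`n mod N₂`. As `N₂` is even, every residue of `n₂ - k n₁` mod `N₂` is `m` or `-m-1` for some
`0 ≤ m < N₂/2`, which gives the set equality. Factoring out the half-angle,
`x n₁ + x' (k n₁ + j) = e^{iα} · 2cos(π(2j+1)/(2N₂))`, and `j = m`, `j = -m-1` give the same
modulus.
-/

open Real

theorem Complex.exp_add_exp_mul_I (a b : ℝ) :
    Complex.exp (a * Complex.I) + Complex.exp (b * Complex.I) =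
      Complex.exp ((a + b) / 2 * Complex.I) * (2 * Complex.cos ((b - a) / 2)) := by
  rw [Complex.two_cos, mul_add, ← Complex.exp_add, ← Complex.exp_add]
  ring_nf

theorem Complex.norm_exp_add_exp_mul_I (a b : ℝ) :
    ‖Complex.exp (a * Complex.I) + Complex.exp (b * Complex.I)‖ = 2 * |Real.cos ((b - a) / 2)| := by
  rw [Complex.exp_add_exp_mul_I, norm_mul, ← Complex.ofReal_add, ← Complex.ofReal_ofNat,
    ← Complex.ofReal_div, Complex.norm_exp_ofReal_mul_I, one_mul, ← Complex.ofReal_sub,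
    ← Complex.ofReal_div, ← Complex.ofReal_cos, ← Complex.ofReal_mul, Complex.norm_real,
    Real.norm_eq_abs, abs_mul, abs_two]

theorem Complex.exp_pi_mul_odd_div_mul_I_eq_of_modEq {N : ℕ} {a b : ℤ} (h : a ≡ b [ZMOD N]) :
    Complex.exp (π * (2 * a + 1) / N * Complex.I) =
      Complex.exp (π * (2 * b + 1) / N * Complex.I) := by
  obtain ⟨t, ht⟩ := Int.modEq_iff_dvd.mp h.symm
  rcases eq_or_ne N 0 with rfl | hN
  · obtain rfl : a = b := by simpa [sub_eq_zero] using ht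
    rfl
  refine Complex.exp_eq_exp_iff_exists_int.mpr ⟨t, ?_⟩
  have ht' : (a : ℂ) = b + N * t := by rw [show a = b + N * t by linarith]; push_cast; ring
  rw [ht']
  field_simp
  ring

theorem Int.exists_le_modEq_add_or_modEq_sub_sub_one {N : ℕ} (hN : Even N) (hpos : 0 < N)
    (a c : ℤ) : ∃ m ≤ N / 2 - 1, a ≡ c + m [ZMOD N] ∨ a ≡ c - m - 1 [ZMOD N] := by
  have hNz : (0 : ℤ) < N := by exact_mod_cast hpos
  have h0 := Int.emod_nonneg (a - c) hNz.ne'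
  have hlt := Int.emod_lt_of_pos (a - c) hNz
  have hdiv := Int.emod_def (a - c) N
  obtain ⟨r, hr⟩ := hN
  by_cases hsmall : (a - c) % N < r
  · refine ⟨((a - c) % N).toNat, by omega, Or.inl ?_⟩
    rw [Int.toNat_of_nonneg h0]
    exact Int.modEq_iff_dvd.mpr ⟨-((a - c) / N), by linear_combination hdiv⟩
  · refine ⟨(N - 1 - (a - c) % N).toNat, by omega, Or.inr ?_⟩
    rw [Int.toNat_of_nonneg (by omega)]
    exact Int.modEq_iff_dvd.mpr ⟨-((a - c) / N) - 1, by linear_combination hdiv⟩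

theorem Int.exists_natCast_lt_modEq {N : ℕ} (hpos : 0 < N) (a : ℤ) :
    ∃ n < N, (n : ℤ) ≡ a [ZMOD N] := by
  have hNz : (0 : ℤ) < N := by exact_mod_cast hpos
  refine ⟨(a % N).toNat, by have := Int.emod_lt_of_pos a hNz; omega, ?_⟩
  rw [Int.toNat_of_nonneg (Int.emod_nonneg a hNz.ne')]
  exact Int.mod_modEq a N

theorem norm_exp_add_exp_pi_mul_odd {N₁ N₂ k : ℕ} (hkN : k * N₁ = N₂) (hN₂ : N₂ ≠ 0) (x j : ℝ) :
    ‖Complex.exp (2 * π * x / N₁ * Complex.I) +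
        Complex.exp (π * (2 * (k * x + j) + 1) / N₂ * Complex.I)‖ =
      2 * |cos (π * (2 * j + 1) / (2 * N₂))| := by
  have hN₁ : (N₁ : ℝ) ≠ 0 := by rintro h; simp_all
  have hk : (k : ℝ) ≠ 0 := by rintro h; simp_all
  have hkN' : (k : ℝ) * N₁ = N₂ := by exact_mod_cast hkN
  have hx : (2 * π * x / N₁ : ℂ) = ((2 * π * x / N₁ : ℝ) : ℂ) := by push_cast; rfl
  have hj : (π * (2 * (k * x + j) + 1) / N₂ : ℂ) = ((π * (2 * (k * x + j) + 1) / N₂ : ℝ) : ℂ) := by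
    push_cast; rfl
  rw [hx, hj, Complex.norm_exp_add_exp_mul_I, ← hkN']
  congr 3
  field_simp
  ring

theorem cos_pi_mul_odd_div_nonneg {N m : ℕ} (hm : 2 * m + 1 ≤ N) :
    0 ≤ cos (π * (2 * m + 1) / (2 * N)) := by
  have hm' : (2 * m + 1 : ℝ) ≤ N := by exact_mod_cast hm
  apply cos_nonneg_of_neg_pi_div_two_le_of_le
  · have : 0 ≤ π * (2 * m + 1) / (2 * N) := by positivity
    linarith [pi_pos]
  · rw [div_le_div_iff₀ (by linarith) two_pos]
    nlinarith [pi_pos]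

theorem setOf_exp_add_exp_pi_mul_odd_eq_union {N₁ N₂ : ℕ} (hN₂ : Even N₂) (hpos : 0 < N₂)
    (k : ℕ) :
    {z : ℂ | ∃ n₁ < N₁, ∃ n₂ < N₂,
        z = Complex.exp (2 * π * n₁ / N₁ * Complex.I) +
            Complex.exp (π * (2 * (n₂ : ℂ) + 1) / N₂ * Complex.I)} =
      {z : ℂ | ∃ n₁ < N₁, ∃ m ≤ N₂ / 2 - 1,
        z = Complex.exp (2 * π * n₁ / N₁ * Complex.I) +
            Complex.exp (π * (2 * ((k : ℂ) * n₁ + m) + 1) / N₂ * Complex.I)} ∪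
      {z : ℂ | ∃ n₁ < N₁, ∃ m ≤ N₂ / 2 - 1,
        z = Complex.exp (2 * π * n₁ / N₁ * Complex.I) +
            Complex.exp (π * (2 * ((k : ℂ) * n₁ - m - 1) + 1) / N₂ * Complex.I)} := by
  ext z
  constructor
  · rintro ⟨n₁, hn₁, n₂, hn₂, rfl⟩
    obtain ⟨m, hm, h | h⟩ := Int.exists_le_modEq_add_or_modEq_sub_sub_one hN₂ hpos n₂ (k * n₁)
    all_goals
      have hexp := Complex.exp_pi_mul_odd_div_mul_I_eq_of_modEq h
      push_cast at hexp
      rw [hexp]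
    exacts [Or.inl ⟨n₁, hn₁, m, hm, rfl⟩, Or.inr ⟨n₁, hn₁, m, hm, rfl⟩]
  · rintro (⟨n₁, hn₁, m, hm, rfl⟩ | ⟨n₁, hn₁, m, hm, rfl⟩)
    · obtain ⟨n₂, hn₂, h⟩ := Int.exists_natCast_lt_modEq hpos (k * n₁ + m)
      have hexp := Complex.exp_pi_mul_odd_div_mul_I_eq_of_modEq h
      push_cast at hexp
      exact ⟨n₁, hn₁, n₂, hn₂, by rw [hexp]⟩
    · obtain ⟨n₂, hn₂, h⟩ := Int.exists_natCast_lt_modEq hpos (k * n₁ - m - 1)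
      have hexp := Complex.exp_pi_mul_odd_div_mul_I_eq_of_modEq h
      push_cast at hexp
      exact ⟨n₁, hn₁, n₂, hn₂, by rw [hexp]⟩

theorem stmt_11_general (N₁ N₂ : ℕ) (hN2even : Even N₂)
    (hN2pos : 0 < N₂) (hdvd : N₁ ∣ N₂)
    (k : ℕ) (hk : k = N₂ / N₁) :
    ({z : ℂ | ∃ n₁ < N₁, ∃ n₂ < N₂,
        z = Complex.exp (2 * π * n₁ / N₁ * Complex.I) +
            Complex.exp (π * (2 * (n₂ : ℂ) + 1) / N₂ * Complex.I)} =
      {z : ℂ | ∃ n₁ < N₁, ∃ m ≤ N₂ / 2 - 1,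
        z = Complex.exp (2 * π * n₁ / N₁ * Complex.I) +
            Complex.exp (π * (2 * ((k : ℂ) * n₁ + m) + 1) / N₂ * Complex.I)} ∪
      {z : ℂ | ∃ n₁ < N₁, ∃ m ≤ N₂ / 2 - 1,
        z = Complex.exp (2 * π * n₁ / N₁ * Complex.I) +
            Complex.exp (π * (2 * ((k : ℂ) * n₁ - m - 1) + 1) / N₂ * Complex.I)}) ∧
    (∀ z : ℂ,
      z ∈ {z : ℂ | ∃ n₁ < N₁, ∃ n₂ < N₂,
        z = Complex.exp (2 * π * n₁ / N₁ * Complex.I) +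
            Complex.exp (π * (2 * (n₂ : ℂ) + 1) / N₂ * Complex.I)} →
      ∃ m ≤ N₂ / 2 - 1, ‖z‖ = 2 * cos (π * (2 * m + 1) / (2 * N₂))) := by
  have hsets := setOf_exp_add_exp_pi_mul_odd_eq_union (N₁ := N₁) hN2even hN2pos k
  refine ⟨hsets, fun z hz => ?_⟩
  have hkN : k * N₁ = N₂ := hk ▸ Nat.div_mul_cancel hdvd
  rw [hsets] at hz
  rcases hz with ⟨n₁, hn₁, m, hm, rfl⟩ | ⟨n₁, hn₁, m, hm, rfl⟩
  · refine ⟨m, hm, ?_⟩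
    have hnorm := norm_exp_add_exp_pi_mul_odd hkN hN2pos.ne' n₁ m
    push_cast at hnorm
    rw [hnorm, abs_of_nonneg (cos_pi_mul_odd_div_nonneg (by omega))]
  · refine ⟨m, hm, ?_⟩
    have hnorm := norm_exp_add_exp_pi_mul_odd hkN hN2pos.ne' n₁ (-m - 1)
    push_cast at hnorm
    rw [show (k : ℂ) * n₁ - m - 1 = k * n₁ + (-m - 1) by ring, hnorm,
      show π * (2 * (-(m : ℝ) - 1) + 1) / (2 * N₂) = -(π * (2 * m + 1) / (2 * N₂)) by ring,
      cos_neg, abs_of_nonneg (cos_pi_mul_odd_div_nonneg (by omega))]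

/-- The sum alphabet
`S_sum = {x n₁ + x' n₂ : 0 ≤ n₁ < N₁, 0 ≤ n₂ < N₂}` equals the union
`{x n₁ + x' (k n₁ + m)} ∪ {x n₁ + x' (k n₁ - m - 1)}` over `0 ≤ n₁ < N₁`,
`0 ≤ m ≤ N₂/2 - 1`; and `S_sum` is contained in the union of the `N₂/2`
concentric circles of radii `2·cos(π(2m+1)/(2N₂))`. Here `x n = e^{2πi n/N₁}`,
`x' n = e^{iπ(2n+1)/N₂}` (indices mod `N₂`, automatic by periodicity). -/
theorem stmt_11 (N₁ N₂ : ℕ) (hN1even : Even N₁) (hN2even : Even N₂)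
    (hN1pos : 0 < N₁) (hN2pos : 0 < N₂) (hdvd : N₁ ∣ N₂)
    (k : ℕ) (hk : k = N₂ / N₁) :
    ({z : ℂ | ∃ n₁ < N₁, ∃ n₂ < N₂,
        z = Complex.exp (2 * π * n₁ / N₁ * Complex.I) +
            Complex.exp (π * (2 * (n₂ : ℂ) + 1) / N₂ * Complex.I)} =
      {z : ℂ | ∃ n₁ < N₁, ∃ m ≤ N₂ / 2 - 1,
        z = Complex.exp (2 * π * n₁ / N₁ * Complex.I) +
            Complex.exp (π * (2 * ((k : ℂ) * n₁ + m) + 1) / N₂ * Complex.I)} ∪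
      {z : ℂ | ∃ n₁ < N₁, ∃ m ≤ N₂ / 2 - 1,
        z = Complex.exp (2 * π * n₁ / N₁ * Complex.I) +
            Complex.exp (π * (2 * ((k : ℂ) * n₁ - m - 1) + 1) / N₂ * Complex.I)}) ∧
    (∀ z : ℂ,
      z ∈ {z : ℂ | ∃ n₁ < N₁, ∃ n₂ < N₂,
        z = Complex.exp (2 * π * n₁ / N₁ * Complex.I) +
            Complex.exp (π * (2 * (n₂ : ℂ) + 1) / N₂ * Complex.I)} →
      ∃ m ≤ N₂ / 2 - 1, ‖z‖ = 2 * cos (π * (2 * m + 1) / (2 * N₂))) :=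
  stmt_11_general N₁ N₂ hN2even hN2pos hdvd k hk
end

section
/- For distinct points p, q of the Ungerboeck subset S^{eo}_sum lying on the same circle C^m, the angular separation is a nonzero multiple of 4π/N₁, and hence |p - q| ≥ 2·r(m)·sin(2π/N₁) ≥ 4·sin(π/(2N₂))·sin(2π/N₁). -/
/-!
Writing a point of `S^{eo}_sum` as `e^{iα} + e^{iβ} = 2 cos((α - β)/2) e^{i(α + β)/2}`, the
condition of lying on `C^m` pins `(α - β)/2` down to `±θ` modulo `π`, where
`r(m) = 2 cos θ`, and a parity count shows that the sign is `(-1)^m`. Hence every point of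
`S^{eo}_sum` on `C^m` is `r(m) e^{i(4πa/N₁ ∓ θ)}` for some integer `a`, with the same offset
`∓θ` for all of them. Two such points differ in angle by `4π(a - b)/N₁`; they coincide exactly
when `N₁/2 ∣ a - b`, and otherwise `|p - q| = 2 r(m) |sin(2π(a - b)/N₁)| ≥ 2 r(m) sin(2π/N₁)`.
-/

open Real

/-- The Ungerboeck subset `S^{eo}_sum = S^e_1 + S^o_2` where
`S^e_1 = {e^{2πi n₁/N₁} : n₁ even}` and
`S^o_2 = {e^{2πi n₂/N₂}·e^{iπ/N₂} = e^{iπ(2n₂+1)/N₂} : n₂ odd}`. -/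
noncomputable def SeoSum (N₁ N₂ : ℕ) : Set ℂ :=
  {z | ∃ n₁ n₂ : ℕ, n₁ < N₁ ∧ Even n₁ ∧ n₂ < N₂ ∧ Odd n₂ ∧
    z = Complex.exp (2 * Real.pi * n₁ / N₁ * Complex.I) +
        Complex.exp (Real.pi * (2 * n₂ + 1) / N₂ * Complex.I)}

theorem exp_mul_I_add_exp_mul_I_sub_two_mul (x t : ℝ) :
    Complex.exp (x * Complex.I) + Complex.exp ((x - 2 * t : ℝ) * Complex.I) =
      2 * cos t * Complex.exp ((x - t : ℝ) * Complex.I) := by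
  rw [Complex.ofReal_cos, Complex.two_cos, add_mul, ← Complex.exp_add, ← Complex.exp_add]
  push_cast
  ring_nf

theorem norm_exp_mul_I_add_exp_mul_I (x y : ℝ) :
    ‖Complex.exp (x * Complex.I) + Complex.exp (y * Complex.I)‖ = 2 * |cos ((x - y) / 2)| := by
  have h := exp_mul_I_add_exp_mul_I_sub_two_mul x ((x - y) / 2)
  rw [show x - 2 * ((x - y) / 2) = y by ring] at h
  rw [h, norm_mul, norm_mul, Complex.norm_exp_ofReal_mul_I, Complex.norm_real, Complex.norm_two,
    Real.norm_eq_abs, mul_one]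

theorem norm_exp_mul_I_sub_exp_mul_I (x y : ℝ) :
    ‖Complex.exp (x * Complex.I) - Complex.exp (y * Complex.I)‖ = 2 * |sin ((x - y) / 2)| := by
  have h : Complex.exp (x * Complex.I) - Complex.exp (y * Complex.I) =
      Complex.exp (y * Complex.I) * (Complex.exp (Complex.I * (x - y : ℝ)) - 1) := by
    rw [mul_sub, ← Complex.exp_add, mul_one]
    push_cast
    ring_nf
  rw [h, norm_mul, Complex.norm_exp_ofReal_mul_I, one_mul, Complex.norm_exp_I_mul_ofReal_sub_one,
    norm_mul, Real.norm_eq_abs, Real.norm_eq_abs, abs_two]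

theorem exists_int_eq_of_abs_cos_eq {a b : ℝ} (h : |cos a| = cos b) :
    ∃ s : ℤ, a = s * π + b ∨ a = s * π - b := by
  rcases abs_eq_abs.mp (h.trans (abs_of_nonneg (h ▸ abs_nonneg _)).symm) with h | h
  · obtain ⟨k, hk | hk⟩ := Real.cos_eq_cos_iff.mp h
    · exact ⟨-2 * k, Or.inl (by push_cast; linarith)⟩
    · exact ⟨2 * k, Or.inr (by push_cast; linarith)⟩
  · rw [← Real.cos_add_pi] at h
    obtain ⟨k, hk | hk⟩ := Real.cos_eq_cos_iff.mp h
    · exact ⟨1 - 2 * k, Or.inl (by push_cast; linarith)⟩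
    · exact ⟨2 * k - 1, Or.inr (by push_cast; linarith)⟩

theorem exists_arg_real_mul_exp_mul_I {r : ℝ} (hr : 0 < r) (A : ℝ) :
    ∃ t : ℤ, Complex.arg (r * Complex.exp (A * Complex.I)) = A + 2 * π * t :=
  ⟨_, by rw [Complex.exp_mul_I, ← sub_eq_iff_eq_add', Complex.arg_mul_cos_add_sin_mul_I_sub hr]⟩

theorem sin_le_sin_of_le_of_le_pi_sub {a x : ℝ} (ha : 0 ≤ a) (hax : a ≤ x) (hxa : x ≤ π - a) :
    sin a ≤ sin x := by
  rcases le_total x (π / 2) with hx | hx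
  · exact Real.sin_le_sin_of_le_of_le_pi_div_two (by linarith [pi_pos]) hx hax
  · rw [← Real.sin_pi_sub x]
    exact Real.sin_le_sin_of_le_of_le_pi_div_two (by linarith [pi_pos]) (by linarith) (by linarith)

theorem sin_pi_div_le_abs_sin_pi_mul_div {n : ℕ} {d : ℤ} (hd : ¬ (n : ℤ) ∣ d) :
    sin (π / n) ≤ |sin (π * d / n)| := by
  rcases Nat.eq_zero_or_pos n with rfl | hn
  · simp
  have hnR : (0 : ℝ) < n := by exact_mod_cast hn
  set e := d % n
  have he : 1 ≤ e ∧ e + 1 ≤ n := by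
    have := Int.emod_nonneg d (by omega : (n : ℤ) ≠ 0)
    have := Int.emod_lt_of_pos d (by omega : (0 : ℤ) < n)
    have : e ≠ 0 := fun h => hd (Int.dvd_of_emod_eq_zero h)
    omega
  have heR : (1 : ℝ) ≤ e ∧ (e : ℝ) + 1 ≤ n := by exact_mod_cast he
  have hsplit : π * d / n = π * e / n + (d / n : ℤ) * π := by
    have hd : (d : ℝ) = e + n * (d / n : ℤ) := by exact_mod_cast (Int.emod_add_mul_ediv d n).symm
    rw [hd]
    field_simp
  have hlow : π / n ≤ π * e / n := by
    gcongr
    nlinarith [heR.1, pi_pos]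
  have hhigh : π * e / n ≤ π - π / n := by
    rw [div_le_iff₀ hnR, sub_mul, div_mul_cancel₀ _ hnR.ne']
    nlinarith [heR.2, pi_pos]
  rw [hsplit, Real.sin_add_int_mul_pi, abs_mul, abs_zpow, abs_neg, abs_one, one_zpow, one_mul,
    abs_of_nonneg (Real.sin_nonneg_of_nonneg_of_le_pi (hlow.trans' (by positivity))
      (hhigh.trans (by simp only [sub_le_self_iff]; positivity)))]
  exact sin_le_sin_of_le_of_le_pi_sub (by positivity) hlow hhigh

theorem sin_pi_div_two_mul_le_cos {N m : ℕ} (h : 2 * m + 2 ≤ N) :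
    sin (π / (2 * N)) ≤ cos (π * (2 * m + 1) / (2 * N)) := by
  have hNR : (0 : ℝ) < N := by exact_mod_cast (by omega : 0 < N)
  have hmR : (2 * m + 2 : ℝ) ≤ N := by exact_mod_cast h
  set u := π / (2 * N)
  have hu : 0 < u := by positivity
  have hθ : π * (2 * m + 1) / (2 * N) = u * (2 * m + 1) := by ring
  have hπ : π = 2 * u * N := by simp only [u]; field_simp
  rw [← Real.sin_pi_div_two_sub, hθ]
  apply sin_le_sin_of_le_of_le_pi_sub hu.le <;> nlinarith

/-- `C^m` is the circle of radius `r(m) = 2 * cos (circleAngle N₂ m)`. -/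
noncomputable def circleAngle (N₂ m : ℕ) : ℝ := π * (2 * m + 1) / (2 * N₂)

theorem cos_circleAngle_pos {N m : ℕ} (h : 2 * m + 2 ≤ N) : 0 < cos (circleAngle N m) := by
  have hNR : (1 : ℝ) ≤ N := by exact_mod_cast (by omega : 1 ≤ N)
  have hsin : 0 < sin (π / (2 * N)) :=
    Real.sin_pos_of_pos_of_lt_pi (by positivity) (div_lt_self pi_pos (by linarith))
  exact hsin.trans_le (sin_pi_div_two_mul_le_cos h)

-- Multiplying by `2N/π` turns `hs` into `L = 2Ns ± (2m + 1)`; since `N` is even and `L ≡ 1`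
-- mod 4, only the sign `(-1)^m` is possible.
theorem eq_int_mul_pi_add_neg_one_pow_mul_circleAngle {N m : ℕ} (hN : Even N) (hN₀ : 0 < N)
    {L s : ℤ} (hL : L % 4 = 1)
    (hs : π * L / (2 * N) = s * π + circleAngle N m ∨ π * L / (2 * N) = s * π - circleAngle N m) :
    π * L / (2 * N) = s * π + (-1) ^ m * circleAngle N m := by
  have hNR : (0 : ℝ) < N := by exact_mod_cast hN₀
  have hNs : 2 ∣ (N : ℤ) * s := dvd_mul_of_dvd_left (by exact_mod_cast hN.two_dvd) s
  unfold circleAngle at hs ⊢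
  rcases hs with hs | hs
  · have hint : L = 2 * (N * s) + (2 * m + 1) := by
      rify
      field_simp at hs
      linear_combination hs
    have hm : Even m := by rw [even_iff_two_dvd]; omega
    rw [hm.neg_one_pow, one_mul, hs]
  · have hint : L = 2 * (N * s) - (2 * m + 1) := by
      rify
      field_simp at hs
      linear_combination hs
    have hm : Odd m := by rw [Nat.odd_iff]; omega
    rw [hm.neg_one_pow, hs]
    ring

theorem exists_eq_mul_exp_of_mem_SeoSum {N₁ N₂ m : ℕ} (hdvd : N₁ ∣ N₂) (hN₂ : Even N₂) {z : ℂ}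
    (hz : z ∈ SeoSum N₁ N₂) (hzm : ‖z‖ = 2 * cos (circleAngle N₂ m)) :
    ∃ a : ℤ, z = (2 * cos (circleAngle N₂ m) : ℝ) *
      Complex.exp ((4 * π * a / N₁ - (-1) ^ m * circleAngle N₂ m : ℝ) * Complex.I) := by
  obtain ⟨n₁, n₂, hn₁, ⟨a, rfl⟩, hn₂, ⟨d, rfl⟩, rfl⟩ := hz
  obtain ⟨k, rfl⟩ := hdvd
  have hN₁ : (0 : ℝ) < N₁ := by exact_mod_cast (by omega : 0 < N₁)
  have hk : (0 : ℝ) < k := by exact_mod_cast Nat.pos_of_mul_pos_left (by omega : 0 < N₁ * k)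
  set θ := circleAngle (N₁ * k) m
  set τ : ℝ := (-1) ^ m * θ
  set α : ℝ := 4 * π * a / N₁
  set β : ℝ := π * (2 * (2 * d + 1 : ℕ) + 1) / (N₁ * k : ℕ)
  have hsum : Complex.exp (2 * π * (a + a : ℕ) / N₁ * Complex.I) +
      Complex.exp (π * (2 * (2 * d + 1 : ℕ) + 1) / (N₁ * k : ℕ) * Complex.I) =
      Complex.exp (α * Complex.I) + Complex.exp (β * Complex.I) := by
    simp only [α, β]
    push_cast
    ring_nf
  rw [hsum] at hzm ⊢
  rw [norm_exp_mul_I_add_exp_mul_I] at hzm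
  obtain ⟨s, hs⟩ := exists_int_eq_of_abs_cos_eq (a := (α - β) / 2) (b := θ) (by linarith)
  have hunits : (α - β) / 2 = π * (4 * (k * a) - 4 * d - 3 : ℤ) / (2 * (N₁ * k : ℕ)) := by
    simp only [α, β]
    push_cast
    field_simp
    ring
  rw [hunits] at hs
  have hφ : (α - β) / 2 = s * π + τ :=
    hunits.trans (eq_int_mul_pi_add_neg_one_pow_mul_circleAngle hN₂ (by omega) (by omega) hs)
  have hβ : Complex.exp (β * Complex.I) = Complex.exp ((α - 2 * τ : ℝ) * Complex.I) := by
    rw [Complex.exp_eq_exp_iff_exists_int]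
    have h := congrArg (fun x : ℝ => (x : ℂ)) hφ
    push_cast at h
    exact ⟨-s, by push_cast; linear_combination (-2 * Complex.I) * h⟩
  have hcos : cos τ = cos θ := by
    rcases neg_one_pow_eq_or ℝ m with h | h <;> simp [τ, h]
  refine ⟨a, ?_⟩
  rw [hβ, exp_mul_I_add_exp_mul_I_sub_two_mul, hcos]
  simp only [α, τ]
  push_cast
  ring

theorem exists_arg_sub_eq_and_sin_le_norm_sub {n : ℕ} (hn : 0 < n) {r : ℝ} (hr : 0 < r) (τ : ℝ)
    {a b : ℤ} {p q : ℂ} (hp : p = r * Complex.exp ((2 * π * a / n - τ : ℝ) * Complex.I))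
    (hq : q = r * Complex.exp ((2 * π * b / n - τ : ℝ) * Complex.I)) (hpq : p ≠ q) :
    (∃ j : ℤ, ¬ (n : ℤ) ∣ j ∧ Complex.arg p - Complex.arg q = 2 * π * j / n) ∧
      2 * r * sin (π / n) ≤ ‖p - q‖ := by
  have hnR : (0 : ℝ) < n := by exact_mod_cast hn
  have hdist : ‖p - q‖ = r * (2 * |sin (π * (a - b : ℤ) / n)|) := by
    rw [hp, hq, ← mul_sub, norm_mul, Complex.norm_real, Real.norm_of_nonneg hr.le,
      norm_exp_mul_I_sub_exp_mul_I]
    congr 4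
    push_cast
    field_simp
    ring
  have hnd : ¬ (n : ℤ) ∣ (a - b) := by
    rintro ⟨c, hc⟩
    apply hpq
    rw [← sub_eq_zero, ← norm_eq_zero, hdist, hc]
    push_cast
    field_simp
    simp [mul_comm π, Real.sin_int_mul_pi]
  obtain ⟨t₁, ht₁⟩ := exists_arg_real_mul_exp_mul_I hr (2 * π * a / n - τ)
  obtain ⟨t₂, ht₂⟩ := exists_arg_real_mul_exp_mul_I hr (2 * π * b / n - τ)
  refine ⟨⟨a - b + n * (t₁ - t₂), fun h => hnd ((Int.dvd_add_left (dvd_mul_right _ _)).mp h), ?_⟩,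
    ?_⟩
  · rw [hp, hq, ht₁, ht₂]
    push_cast
    field_simp
    ring
  · rw [hdist]
    nlinarith [sin_pi_div_le_abs_sin_pi_mul_div hnd]

theorem stmt_14_general (N₁ N₂ u₁ u₂ : ℕ) (h1 : N₁ = 2 ^ u₁) (h2 : N₂ = 2 ^ u₂)
    (h4 : 4 ≤ N₁) (hle : N₁ ≤ N₂)
    (m : ℕ) (hm : m ≤ N₂ / 2 - 1) (p q : ℂ)
    (hp : p ∈ SeoSum N₁ N₂) (hq : q ∈ SeoSum N₁ N₂)
    (hpm : ‖p‖ = 2 * cos (π * (2 * m + 1) / (2 * N₂)))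
    (hqm : ‖q‖ = 2 * cos (π * (2 * m + 1) / (2 * N₂)))
    (hpq : p ≠ q) :
    (∃ j : ℤ, ¬ (((N₁ : ℤ) / 2) ∣ j) ∧
        Complex.arg p - Complex.arg q = 4 * π * j / N₁) ∧
      2 * (2 * cos (π * (2 * m + 1) / (2 * N₂))) * sin (2 * π / N₁) ≤
        ‖p - q‖ ∧
      4 * sin (π / (2 * N₂)) * sin (2 * π / N₁) ≤
        2 * (2 * cos (π * (2 * m + 1) / (2 * N₂))) * sin (2 * π / N₁) := by
  have hdvd : N₁ ∣ N₂ := by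
    subst h1 h2
    exact Nat.pow_dvd_pow 2 ((Nat.pow_le_pow_iff_right (by norm_num)).mp hle)
  obtain ⟨v, hv⟩ : 2 ∣ N₁ := h1 ▸ dvd_pow_self 2 (by rintro rfl; simp at h1; omega)
  have hN₂ : Even N₂ := even_iff_two_dvd.mpr ((Dvd.intro v hv.symm).trans hdvd)
  have hmN : 2 * m + 2 ≤ N₂ := by have := hN₂.two_dvd; omega
  have hN₁R : (N₁ : ℝ) = 2 * v := by exact_mod_cast hv
  have hcos := sin_pi_div_two_mul_le_cos hmN
  have hr : 0 < 2 * cos (circleAngle N₂ m) := by linarith [cos_circleAngle_pos hmN]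
  have hangle : ∀ c : ℤ, 4 * π * c / N₁ = 2 * π * c / v := fun c => by rw [hN₁R]; field_simp; ring
  obtain ⟨a, hpa⟩ := exists_eq_mul_exp_of_mem_SeoSum hdvd hN₂ hp hpm
  obtain ⟨b, hqb⟩ := exists_eq_mul_exp_of_mem_SeoSum hdvd hN₂ hq hqm
  rw [hangle] at hpa hqb
  obtain ⟨⟨j, hj, harg⟩, hdist⟩ :=
    exists_arg_sub_eq_and_sin_le_norm_sub (by omega) hr _ hpa hqb hpq
  have hπv : 2 * π / N₁ = π / v := by rw [hN₁R]; field_simp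
  have hsin : 0 ≤ sin (2 * π / N₁) := by
    rw [hπv]
    exact Real.sin_nonneg_of_nonneg_of_le_pi (by positivity)
      (div_le_self pi_pos.le (by exact_mod_cast (by omega : 1 ≤ v)))
  refine ⟨⟨j, ?_, ?_⟩, by rwa [hπv], by linarith [mul_le_mul_of_nonneg_right hcos hsin]⟩
  · rwa [hv, Nat.cast_mul, Nat.cast_two, Int.mul_ediv_cancel_left _ two_ne_zero]
  · rw [harg, hN₁R]
    field_simp
    ring

/-- For distinct points `p, q` of `S^{eo}_sum` lying on the same
circle `C^m` (of radius `r m = 2·cos(π(2m+1)/(2N₂))`), the angular separation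
is a nonzero multiple of `4π/N₁` (mod `2π`, i.e. the multiplier is not
divisible by `N₁/2`), and hence
`|p - q| ≥ 2·r(m)·sin(2π/N₁) ≥ 4·sin(π/(2N₂))·sin(2π/N₁)`. -/
theorem stmt_14 (N₁ N₂ u₁ u₂ : ℕ) (h1 : N₁ = 2 ^ u₁) (h2 : N₂ = 2 ^ u₂)
    (h4 : 4 ≤ N₁) (hle : N₁ ≤ N₂) (k : ℕ) (hk : k = N₂ / N₁)
    (m : ℕ) (hm : m ≤ N₂ / 2 - 1) (p q : ℂ)
    (hp : p ∈ SeoSum N₁ N₂) (hq : q ∈ SeoSum N₁ N₂)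
    (hpm : ‖p‖ = 2 * cos (π * (2 * m + 1) / (2 * N₂)))
    (hqm : ‖q‖ = 2 * cos (π * (2 * m + 1) / (2 * N₂)))
    (hpq : p ≠ q) :
    (∃ j : ℤ, ¬ (((N₁ : ℤ) / 2) ∣ j) ∧
        Complex.arg p - Complex.arg q = 4 * π * j / N₁) ∧
      2 * (2 * cos (π * (2 * m + 1) / (2 * N₂))) * sin (2 * π / N₁) ≤
        ‖p - q‖ ∧
      4 * sin (π / (2 * N₂)) * sin (2 * π / N₁) ≤
        2 * (2 * cos (π * (2 * m + 1) / (2 * N₂))) * sin (2 * π / N₁) :=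
  stmt_14_general N₁ N₂ u₁ u₂ h1 h2 h4 hle m hm p q hp hq hpm hqm hpq
end

section
/- Minimum distance of the Ungerboeck subset: for powers of 2 N₁, N₂ with 8 ≤ N₁ ≤ N₂, the minimum Euclidean distance of the set S^{eo}_sum = S^e_1 + S^o_2 equals 4·sin(π/(2N₂))·sin(2π/N₁). -/
open Real

/-!
Write `p - q` as a sum of two chords: `‖p - q‖² = 4 (s² + t² + 2 s t cos w)` with
`s = sin (π j₁ / H₁)`, `t = sin (π j₂ / H₂)` (`Hᵢ = Nᵢ / 2`) and `w` an odd multiple of `π / N₂`,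
so `|cos w| ≤ cos (π / N₂) = 1 - 2 q²` with `q = sin (π / (2 N₂))`. This gives
`‖p - q‖² ≥ 4 ((|s| - |t|)² + 4 q² |s| |t|)`. Both `|s|` and `|t|` take only the values
`|sin (π j / H)|`, and `S = sin (2π / N₁) = sin (π k / H₂)` (`k = N₂ / N₁`) is a value of `|t|`:
either `|t| ≥ S`, and the second term gives `16 q² S²`, or `|t| ≤ sin (π (k - 1) / H₂)`, and the
gap `S - |t| ≥ 4 q² S` makes the first term large enough. The bound is attained at
`p = 1 + ω ζ`, `q = ω + ζ` with `ω = e^{4πi/N₁}`, `ζ = e^{-iπ/N₂}`, since `p - q = (ω - 1)(ζ - 1)`.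
-/

lemma exp_ofReal_mul_I_sub_exp_ofReal_mul_I (x y : ℝ) :
    Complex.exp (x * Complex.I) - Complex.exp (y * Complex.I) =
      2 * Complex.I * (sin ((x - y) / 2) : ℝ) * Complex.exp (((x + y) / 2 : ℝ) * Complex.I) := by
  have hx : (x : ℂ) * Complex.I =
      ((x + y) / 2 : ℝ) * Complex.I + ((x - y) / 2 : ℝ) * Complex.I := by push_cast; ring
  have hy : (y : ℂ) * Complex.I =
      ((x + y) / 2 : ℝ) * Complex.I + -(((x - y) / 2 : ℝ) * Complex.I) := by push_cast; ring
  rw [hx, hy, Complex.exp_add, Complex.exp_add, Complex.ofReal_sin, Complex.sin]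
  simp only [neg_mul]
  linear_combination (Complex.exp (((x + y) / 2 : ℝ) * Complex.I) *
    (Complex.exp (((x - y) / 2 : ℝ) * Complex.I) -
      Complex.exp (-(((x - y) / 2 : ℝ) * Complex.I)))) * Complex.I_sq

lemma norm_ofReal_mul_exp_add_ofReal_mul_exp_sq (s t φ ψ : ℝ) :
    ‖(s : ℂ) * Complex.exp (φ * Complex.I) + (t : ℂ) * Complex.exp (ψ * Complex.I)‖ ^ 2 =
      s ^ 2 + t ^ 2 + 2 * s * t * cos (φ - ψ) := by
  rw [Complex.sq_norm, Complex.normSq_apply]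
  simp only [Complex.add_re, Complex.add_im, Complex.mul_re, Complex.mul_im, Complex.ofReal_re,
    Complex.ofReal_im, Complex.exp_ofReal_mul_I_re, Complex.exp_ofReal_mul_I_im, cos_sub]
  nlinarith [sin_sq_add_cos_sq φ, sin_sq_add_cos_sq ψ]

lemma norm_exp_add_exp_sub_exp_add_exp_sq (x₁ y₁ x₂ y₂ : ℝ) :
    ‖(Complex.exp (x₁ * Complex.I) + Complex.exp (y₁ * Complex.I)) -
        (Complex.exp (x₂ * Complex.I) + Complex.exp (y₂ * Complex.I))‖ ^ 2 =
      4 * (sin ((x₁ - x₂) / 2) ^ 2 + sin ((y₁ - y₂) / 2) ^ 2 +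
        2 * sin ((x₁ - x₂) / 2) * sin ((y₁ - y₂) / 2) *
          cos ((x₁ + x₂) / 2 - (y₁ + y₂) / 2)) := by
  rw [add_sub_add_comm, exp_ofReal_mul_I_sub_exp_ofReal_mul_I,
    exp_ofReal_mul_I_sub_exp_ofReal_mul_I,
    show ∀ a b c d : ℂ, 2 * Complex.I * a * b + 2 * Complex.I * c * d =
      2 * Complex.I * (a * b + c * d) from fun _ _ _ _ => by ring, norm_mul, mul_pow,
    norm_ofReal_mul_exp_add_ofReal_mul_exp_sq]
  norm_num

lemma two_mul_natAbs_bmod_le {H : ℕ} (hH : 0 < H) (j : ℤ) : 2 * (j.bmod H).natAbs ≤ H := by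
  have h₁ := Int.le_bmod (x := j) hH
  have h₂ := Int.bmod_lt (x := j) hH
  omega

lemma abs_sin_pi_mul_div_eq_sin_natAbs_bmod (H : ℕ) (j : ℤ) :
    |sin (π * j / H)| = sin (π * (j.bmod H).natAbs / H) := by
  rcases Nat.eq_zero_or_pos H with rfl | hH
  · simp
  have hHR : (0 : ℝ) < H := by exact_mod_cast hH
  have hb : 2 * |(j.bmod H : ℝ)| ≤ H := by
    rw [← Int.cast_abs, ← Nat.cast_natAbs]
    exact_mod_cast two_mul_natAbs_bmod_le hH j
  obtain ⟨m, hm⟩ := Int.dvd_self_sub_bmod (x := j) (m := H)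
  have hj : π * j / H = π * (j.bmod H : ℝ) / H + m * π := by
    rw [show (j : ℝ) = j.bmod H + H * m by exact_mod_cast (by omega)]
    field_simp
  have hle : |π * (j.bmod H : ℝ) / H| ≤ π := by
    rw [abs_div, abs_mul, abs_of_pos pi_pos, abs_of_pos hHR, div_le_iff₀ hHR]
    nlinarith [pi_pos, abs_nonneg (j.bmod H : ℝ)]
  rw [hj, sin_add_int_mul_pi, abs_mul, abs_neg_one_zpow, one_mul,
    abs_sin_eq_sin_abs_of_abs_le_pi hle, Nat.cast_natAbs, abs_div, abs_mul, abs_of_pos pi_pos,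
    abs_of_pos hHR, Int.cast_abs]

lemma sin_pi_mul_div_le_sin_pi_mul_div {H m n : ℕ} (hmn : m ≤ n) (hn : 2 * n ≤ H) :
    sin (π * m / H) ≤ sin (π * n / H) := by
  rcases Nat.eq_zero_or_pos H with rfl | hH
  · simp
  have hHR : (0 : ℝ) < H := by exact_mod_cast hH
  have hn' : 2 * (n : ℝ) ≤ H := by exact_mod_cast hn
  apply sin_le_sin_of_le_of_le_pi_div_two
  · linarith [pi_pos, (by positivity : 0 ≤ π * m / H)]
  · rw [div_le_div_iff₀ hHR two_pos]
    nlinarith [pi_pos]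
  · gcongr

lemma abs_sin_pi_mul_div_le_or_le {H : ℕ} (k : ℕ) (hk : 2 * (k + 1) ≤ H) (j : ℤ) :
    |sin (π * j / H)| ≤ sin (π * k / H) ∨ sin (π * (k + 1) / H) ≤ |sin (π * j / H)| := by
  rw [abs_sin_pi_mul_div_eq_sin_natAbs_bmod]
  rcases le_or_gt (j.bmod H).natAbs k with h | h
  · exact Or.inl (sin_pi_mul_div_le_sin_pi_mul_div h (by omega))
  · have := sin_pi_mul_div_le_sin_pi_mul_div h (two_mul_natAbs_bmod_le (by omega) j)
    push_cast at this
    exact Or.inr this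

lemma sin_pi_div_le_abs_sin_pi_mul_div_s15 {H : ℕ} {j : ℤ} (hj : ¬ (H : ℤ) ∣ j) :
    sin (π / H) ≤ |sin (π * j / H)| := by
  rcases Nat.eq_zero_or_pos H with rfl | hH
  · simp
  have h₁ : 1 ≤ (j.bmod H).natAbs := by
    rw [Nat.one_le_iff_ne_zero, Ne, Int.natAbs_eq_zero, ← Int.dvd_iff_bmod_eq_zero]
    exact hj
  rw [abs_sin_pi_mul_div_eq_sin_natAbs_bmod]
  simpa using sin_pi_mul_div_le_sin_pi_mul_div h₁ (two_mul_natAbs_bmod_le hH j)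

lemma sin_pi_mul_div_eq_zero_or (H : ℕ) (j : ℤ) :
    sin (π * j / H) = 0 ∨ sin (π / H) ≤ |sin (π * j / H)| := by
  by_cases hj : (H : ℤ) ∣ j
  · left
    rw [← abs_eq_zero, abs_sin_pi_mul_div_eq_sin_natAbs_bmod, Int.dvd_iff_bmod_eq_zero.1 hj]
    simp
  · exact Or.inr (sin_pi_div_le_abs_sin_pi_mul_div_s15 hj)

lemma abs_cos_pi_mul_div_le {N : ℕ} (hN : 2 ≤ N) {w : ℤ} (hw : ¬ (N : ℤ) ∣ w) :
    |cos (π * w / N)| ≤ cos (π / N) := by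
  have hNR : (2 : ℝ) ≤ N := by exact_mod_cast hN
  have hπN : π / N ≤ π / 2 := div_le_div_of_nonneg_left pi_pos.le two_pos hNR
  have hsin := sin_pi_div_le_abs_sin_pi_mul_div_s15 hw
  have hsin₀ : 0 ≤ sin (π / N) :=
    sin_nonneg_of_nonneg_of_le_pi (by positivity) (by linarith [pi_pos])
  have hcos₀ : 0 ≤ cos (π / N) :=
    cos_nonneg_of_mem_Icc ⟨by linarith [pi_pos, (by positivity : 0 ≤ π / N)], hπN⟩
  apply abs_le_of_sq_le_sq _ hcos₀
  nlinarith [pow_le_pow_left₀ hsin₀ hsin 2, sq_abs (sin (π * w / N)),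
    sin_sq_add_cos_sq (π * w / N), sin_sq_add_cos_sq (π / N)]

lemma sq_sub_add_le_of_abs_le {s t c q : ℝ} (hc : |c| ≤ 1 - 2 * q ^ 2) :
    (|s| - |t|) ^ 2 + 4 * q ^ 2 * (|s| * |t|) ≤ s ^ 2 + t ^ 2 + 2 * s * t * c := by
  have h : |s * t * c| ≤ |s| * |t| * (1 - 2 * q ^ 2) := by
    rw [abs_mul, abs_mul]
    exact mul_le_mul_of_nonneg_left hc (by positivity)
  nlinarith [neg_abs_le (s * t * c), sq_abs s, sq_abs t]

lemma four_mul_sq_mul_sq_le_of_gap {q S T M s t : ℝ} (hq : 0 ≤ q) (hq₁ : 4 * q ^ 2 ≤ 1)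
    (hS : 0 ≤ S) (hS₁ : S ≤ 1) (hT : 2 * q ≤ T) (hM : 4 * q ^ 2 * S ≤ S - M)
    (hs : s = 0 ∨ S ≤ |s|) (ht₀ : t = 0 ∨ T ≤ |t|) (ht : |t| ≤ M ∨ S ≤ |t|)
    (hst : s ≠ 0 ∨ t ≠ 0) :
    4 * q ^ 2 * S ^ 2 ≤ (|s| - |t|) ^ 2 + 4 * q ^ 2 * (|s| * |t|) := by
  have hq₂ : 0 ≤ 4 * q ^ 2 := by positivity
  rcases hs with rfl | hs
  · rcases ht₀ with rfl | ht₀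
    · simp at hst
    · simp only [abs_zero, zero_sub, even_two, Even.neg_pow, zero_mul, mul_zero, add_zero]
      nlinarith [mul_le_mul_of_nonneg_left (pow_le_one₀ hS hS₁ : S ^ 2 ≤ 1) hq₂]
  rcases ht₀ with rfl | ht₀
  · simp only [abs_zero, sub_zero, mul_zero, add_zero]
    nlinarith [mul_le_mul_of_nonneg_right hq₁ (sq_nonneg S)]
  rcases ht with ht | ht
  · -- `|s| - |t| ≥ S - M ≥ 4q²S`, so `(|s| - |t|)² ≥ 4q²S (|s| - |t|)`
    have hd : 4 * q ^ 2 * S ≤ |s| - |t| := by linarith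
    have h₁ := mul_le_mul_of_nonneg_right hd (hd.trans' (by positivity))
    have h₂ := mul_nonneg hq₂ (mul_nonneg (abs_nonneg t) (sub_nonneg.2 hs))
    have h₃ := mul_le_mul_of_nonneg_left (mul_le_mul_of_nonneg_left hs hS) hq₂
    nlinarith
  · nlinarith [mul_le_mul hs ht hS (abs_nonneg s), sq_nonneg (|s| - |t|)]

lemma two_mul_sin_div_four_le_sin {x : ℝ} (hx : 0 ≤ x) (hx' : x ≤ π / 2) :
    2 * sin (x / 4) ≤ sin x := by
  have h₁ := sin_le (by positivity : 0 ≤ x / 4)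
  have h₂ := mul_le_sin hx hx'
  have h₃ : x / 2 ≤ 2 / π * x := by
    rw [div_mul_eq_mul_div, le_div_iff₀ pi_pos]; nlinarith [pi_le_four]
  linarith

lemma four_mul_sin_div_four_sq_mul_le_sin_sub_sin {x y : ℝ} (hx : 0 ≤ x) (hxy : x ≤ y)
    (hy : y ≤ π / 4) : 4 * sin (x / 4) ^ 2 * sin y ≤ sin y - sin (y - x) := by
  have hpi := pi_pos
  have hq₀ : 0 ≤ sin (x / 4) := sin_nonneg_of_nonneg_of_le_pi (by positivity) (by linarith)
  have hsin : x / π ≤ sin (x / 2) := by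
    simpa [show 2 / π * (x / 2) = x / π by ring] using
      mul_le_sin (by positivity : 0 ≤ x / 2) (by linarith)
  have hcos : 1 / 2 ≤ cos (y - x / 2) := by
    nlinarith [one_sub_sq_div_two_le_cos (x := y - x / 2), pi_le_four]
  have hq : sin (x / 4) ≤ x / 4 := sin_le (by positivity)
  have hS₀ : 0 ≤ sin y := sin_nonneg_of_nonneg_of_le_pi (by linarith) (by linarith)
  have hS₁ : sin y ≤ 1 := sin_le_one y
  have hsin₀ : 0 ≤ sin (x / 2) := hsin.trans' (by positivity)
  rw [sin_sub_sin, show (y - (y - x)) / 2 = x / 2 by ring,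
    show (y + (y - x)) / 2 = y - x / 2 by ring]
  calc 4 * sin (x / 4) ^ 2 * sin y ≤ 4 * (x / 4) ^ 2 * 1 := by gcongr
    _ ≤ x / π := by rw [le_div_iff₀ hpi]; nlinarith [pi_le_four]
    _ = 2 * (x / π) * (1 / 2) := by ring
    _ ≤ 2 * sin (x / 2) * cos (y - x / 2) := by gcongr

lemma sq_four_mul_sin_mul_sin_le {x y s t c : ℝ} (hx : 0 ≤ x) (hxy : x ≤ y) (hy : y ≤ π / 4)
    (hs : s = 0 ∨ sin y ≤ |s|) (ht₀ : t = 0 ∨ sin x ≤ |t|) (ht : |t| ≤ sin (y - x) ∨ sin y ≤ |t|)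
    (hc : |c| ≤ cos (x / 2)) (hst : s ≠ 0 ∨ t ≠ 0) :
    (4 * sin (x / 4) * sin y) ^ 2 ≤ 4 * (s ^ 2 + t ^ 2 + 2 * s * t * c) := by
  have hq₀ : 0 ≤ sin (x / 4) := sin_nonneg_of_nonneg_of_le_pi (by positivity) (by linarith)
  have hq₁ : 4 * sin (x / 4) ^ 2 ≤ 1 := by
    nlinarith [sin_le (by positivity : 0 ≤ x / 4), pi_le_four]
  have hS₀ : 0 ≤ sin y := sin_nonneg_of_nonneg_of_le_pi (by linarith) (by linarith)
  have hcos : cos (x / 2) = 1 - 2 * sin (x / 4) ^ 2 := by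
    rw [sin_sq_eq_half_sub, show 2 * (x / 4) = x / 2 by ring]
    ring
  have h₁ := sq_sub_add_le_of_abs_le (s := s) (t := t) (hc.trans_eq hcos)
  have h₂ := four_mul_sq_mul_sq_le_of_gap hq₀ hq₁ hS₀ (sin_le_one y)
    (two_mul_sin_div_four_le_sin hx (by linarith))
    (four_mul_sin_div_four_sq_mul_le_sin_sub_sin hx hxy hy) hs ht₀ ht hst
  nlinarith

lemma exists_norm_sub_sq_eq_of_mem_SeoSum {H k : ℕ} {p q : ℂ}
    (hp : p ∈ SeoSum (2 * H) (2 * H * (k + 1))) (hq : q ∈ SeoSum (2 * H) (2 * H * (k + 1))) :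
    ∃ j₁ j₂ w : ℤ, Odd w ∧ ‖p - q‖ ^ 2 =
      4 * (sin (π * j₁ / H) ^ 2 + sin (π * j₂ / (H * (k + 1) : ℕ)) ^ 2 +
        2 * sin (π * j₁ / H) * sin (π * j₂ / (H * (k + 1) : ℕ)) *
          cos (π * w / (2 * H * (k + 1) : ℕ))) := by
  obtain ⟨_, _, ha₁, ⟨a₁, rfl⟩, -, ⟨b₁, rfl⟩, rfl⟩ := hp
  obtain ⟨_, _, -, ⟨a₂, rfl⟩, -, ⟨b₂, rfl⟩, rfl⟩ := hq
  have hH : (H : ℝ) ≠ 0 := Nat.cast_ne_zero.2 (by omega)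
  set α : ℕ → ℝ := fun a => 2 * π * (a + a : ℕ) / (2 * H : ℕ)
  set β : ℕ → ℝ := fun b => π * (2 * (2 * b + 1 : ℕ) + 1) / (2 * H * (k + 1) : ℕ)
  have hpt : ∀ a b : ℕ, Complex.exp (2 * π * (a + a : ℕ) / (2 * H : ℕ) * Complex.I) +
      Complex.exp (π * (2 * (2 * b + 1 : ℕ) + 1) / (2 * H * (k + 1) : ℕ) * Complex.I) =
      Complex.exp (α a * Complex.I) + Complex.exp (β b * Complex.I) := by
    intro a b
    simp only [α, β]
    push_cast
    rfl
  refine ⟨a₁ - a₂, b₁ - b₂, 2 * (k + 1) * (a₁ + a₂) - 2 * (b₁ + b₂) - 3,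
    ⟨(k + 1) * (a₁ + a₂) - (b₁ + b₂) - 2, by ring⟩, ?_⟩
  rw [hpt, hpt, norm_exp_add_exp_sub_exp_add_exp_sq]
  have hs : (α a₁ - α a₂) / 2 = π * ((a₁ - a₂ : ℤ) : ℝ) / H := by
    simp only [α]; push_cast; field_simp; ring
  have ht : (β b₁ - β b₂) / 2 = π * ((b₁ - b₂ : ℤ) : ℝ) / (H * (k + 1) : ℕ) := by
    simp only [β]; push_cast; field_simp; ring
  have hc : (α a₁ + α a₂) / 2 - (β b₁ + β b₂) / 2 =
      π * ((2 * (k + 1) * (a₁ + a₂) - 2 * (b₁ + b₂) - 3 : ℤ) : ℝ) / (2 * H * (k + 1) : ℕ) := by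
    simp only [α, β]; push_cast; field_simp; ring
  rw [hs, ht, hc]

lemma exists_mem_SeoSum_norm_sub_eq {H : ℕ} (k : ℕ) (hH : 2 ≤ H) :
    ∃ p ∈ SeoSum (2 * H) (2 * H * (k + 1)), ∃ q ∈ SeoSum (2 * H) (2 * H * (k + 1)), p ≠ q ∧
      ‖p - q‖ = 4 * sin (π / (2 * (2 * H * (k + 1) : ℕ))) * sin (2 * π / (2 * H : ℕ)) := by
  have hHR : (2 : ℝ) ≤ H := by exact_mod_cast hH
  set N : ℝ := ((2 * H * (k + 1) : ℕ) : ℝ)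
  have hN : 1 ≤ N := by simp only [N]; exact_mod_cast Nat.one_le_iff_ne_zero.2 (by positivity)
  have hsin₁ : 0 < sin (2 * π / (2 * H : ℕ)) := by
    apply sin_pos_of_pos_of_lt_pi (by positivity)
    rw [div_lt_iff₀ (by positivity)]
    push_cast
    nlinarith [pi_pos]
  have hsin₂ : 0 < sin (π / (2 * N)) := by
    apply sin_pos_of_pos_of_lt_pi (by positivity)
    rw [div_lt_iff₀ (by positivity)]
    nlinarith [pi_pos]
  have hH0 : (H : ℂ) ≠ 0 := Nat.cast_ne_zero.2 (by omega)
  set ω := Complex.exp (Complex.I * (2 * π / H : ℝ)) with hω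
  set ζ := Complex.exp (Complex.I * (-(π / N) : ℝ))
  have hp : 1 + ω * ζ ∈ SeoSum (2 * H) (2 * H * (k + 1)) := by
    refine ⟨0, 2 * k + 1, by omega, Even.zero, by nlinarith, odd_two_mul_add_one k, ?_⟩
    rw [← Complex.exp_add]
    congr 1
    · simp
    · congr 1
      simp only [N]
      push_cast
      field_simp
      ring
  have hq : ω + ζ ∈ SeoSum (2 * H) (2 * H * (k + 1)) := by
    have : 0 < 2 * H * (k + 1) := by positivity
    refine ⟨2, 2 * H * (k + 1) - 1, by omega, even_two, by omega,
      Nat.Even.sub_odd (by omega) (by simp) odd_one, ?_⟩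
    have hζ : ζ = Complex.exp (Complex.I * (-(π / N) : ℝ) + 2 * π * Complex.I) := by
      rw [Complex.exp_add, Complex.exp_two_pi_mul_I, mul_one]
    rw [hω, hζ]
    congr 2
    · push_cast
      field_simp
    · simp only [N]
      push_cast [Nat.cast_sub (by omega : 1 ≤ 2 * H * (k + 1))]
      field_simp
      ring
  have hpq : ‖1 + ω * ζ - (ω + ζ)‖ = 4 * sin (π / (2 * N)) * sin (2 * π / (2 * H : ℕ)) := by
    rw [show 1 + ω * ζ - (ω + ζ) = (ω - 1) * (ζ - 1) by ring, norm_mul,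
      Complex.norm_exp_I_mul_ofReal_sub_one, Complex.norm_exp_I_mul_ofReal_sub_one,
      show 2 * π / H / 2 = 2 * π / (2 * H : ℕ) by push_cast; field_simp,
      show -(π / N) / 2 = -(π / (2 * N)) by ring, sin_neg, Real.norm_eq_abs, Real.norm_eq_abs,
      abs_mul, abs_mul, abs_neg, abs_two, abs_of_pos hsin₁, abs_of_pos hsin₂]
    ring
  refine ⟨_, hp, _, hq, fun h => ?_, hpq⟩
  rw [h, sub_self, norm_zero] at hpq
  have : 0 < 4 * sin (π / (2 * N)) * sin (2 * π / (2 * H : ℕ)) := by positivity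
  linarith

lemma le_norm_sub_of_mem_SeoSum {H k : ℕ} (hH : 4 ≤ H) {p q : ℂ}
    (hp : p ∈ SeoSum (2 * H) (2 * H * (k + 1))) (hq : q ∈ SeoSum (2 * H) (2 * H * (k + 1)))
    (hpq : p ≠ q) :
    4 * sin (π / (2 * (2 * H * (k + 1) : ℕ))) * sin (2 * π / (2 * H : ℕ)) ≤ ‖p - q‖ := by
  obtain ⟨j₁, j₂, w, hw, hd⟩ := exists_norm_sub_sq_eq_of_mem_SeoSum hp hq
  have hHR : (4 : ℝ) ≤ H := by exact_mod_cast hH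
  set x := π / ((H * (k + 1) : ℕ) : ℝ)
  set y := π / (H : ℝ)
  have hyx : π * k / ((H * (k + 1) : ℕ) : ℝ) = y - x := by
    simp only [x, y]; push_cast; field_simp; ring
  have hy' : π * (k + 1) / ((H * (k + 1) : ℕ) : ℝ) = y := by
    simp only [y]; push_cast; field_simp
  have hx' : π / ((2 * H * (k + 1) : ℕ) : ℝ) = x / 2 := by
    simp only [x]; push_cast; field_simp
  have hval : 4 * sin (π / (2 * (2 * H * (k + 1) : ℕ))) * sin (2 * π / (2 * H : ℕ)) =
      4 * sin (x / 4) * sin y := by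
    rw [show π / (2 * ((2 * H * (k + 1) : ℕ) : ℝ)) = x / 4 by
        simp only [x]; push_cast; field_simp; ring,
      show 2 * π / ((2 * H : ℕ) : ℝ) = y by simp only [y]; push_cast; field_simp]
  have ht := abs_sin_pi_mul_div_le_or_le k (H := H * (k + 1)) (by nlinarith) j₂
  rw [hyx, hy'] at ht
  have hc := abs_cos_pi_mul_div_le (N := 2 * H * (k + 1)) (by nlinarith) (w := w)
    fun h => Int.not_even_iff_odd.2 hw
      (even_iff_two_dvd.2 (dvd_trans ⟨H * (k + 1), by push_cast; ring⟩ h))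
  rw [hx'] at hc
  have hst : sin (π * j₁ / H) ≠ 0 ∨ sin (π * j₂ / ((H * (k + 1) : ℕ) : ℝ)) ≠ 0 := by
    by_contra! h
    rw [h.1, h.2] at hd
    exact hpq (sub_eq_zero.1 (norm_eq_zero.1 ((pow_eq_zero_iff two_ne_zero).1 (by simpa using hd))))
  have key := sq_four_mul_sin_mul_sin_le (by positivity) ?_ ?_
    (sin_pi_mul_div_eq_zero_or H j₁) (sin_pi_mul_div_eq_zero_or (H * (k + 1)) j₂) ht hc hst
  · rw [hval]
    rw [← hd] at key
    exact (le_abs_self _).trans (abs_le_of_sq_le_sq key (norm_nonneg _))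
  · push_cast
    exact div_le_div_of_nonneg_left pi_pos.le (by positivity) (by nlinarith)
  · exact div_le_div_of_nonneg_left pi_pos.le (by norm_num) hHR

theorem isLeast_norm_sub_SeoSum {H : ℕ} (k : ℕ) (hH : 4 ≤ H) :
    IsLeast {d : ℝ | ∃ p ∈ SeoSum (2 * H) (2 * H * (k + 1)),
        ∃ q ∈ SeoSum (2 * H) (2 * H * (k + 1)), p ≠ q ∧ d = ‖p - q‖}
      (4 * sin (π / (2 * (2 * H * (k + 1) : ℕ))) * sin (2 * π / (2 * H : ℕ))) := by
  obtain ⟨p, hp, q, hq, hpq, hd⟩ := exists_mem_SeoSum_norm_sub_eq k (by omega : 2 ≤ H)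
  refine ⟨⟨p, hp, q, hq, hpq, hd.symm⟩, ?_⟩
  rintro _ ⟨p, hp, q, hq, hpq, rfl⟩
  exact le_norm_sub_of_mem_SeoSum hH hp hq hpq

/-- For powers of 2 `N₁, N₂` with `8 ≤ N₁ ≤ N₂`, the minimum
Euclidean distance of `S^{eo}_sum` equals `4·sin(π/(2N₂))·sin(2π/N₁)`. -/
theorem stmt_15 (N₁ N₂ u₁ u₂ : ℕ) (h1 : N₁ = 2 ^ u₁) (h2 : N₂ = 2 ^ u₂)
    (h8 : 8 ≤ N₁) (hle : N₁ ≤ N₂) :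
    IsLeast {d : ℝ | ∃ p ∈ SeoSum N₁ N₂, ∃ q ∈ SeoSum N₁ N₂,
        p ≠ q ∧ d = ‖p - q‖}
      (4 * sin (π / (2 * N₂)) * sin (2 * π / N₁)) := by
  have hu₁ : u₁ ≠ 0 := by rintro rfl; omega
  have hu : u₁ ≤ u₂ := (Nat.pow_le_pow_iff_right one_lt_two).1 (h1 ▸ h2 ▸ hle)
  obtain ⟨H, rfl⟩ : 2 ∣ N₁ := h1 ▸ dvd_pow_self 2 hu₁
  obtain ⟨K, rfl⟩ : 2 * H ∣ N₂ := h1 ▸ h2 ▸ Nat.pow_dvd_pow 2 hu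
  obtain ⟨k, rfl⟩ : ∃ k, K = k + 1 := Nat.exists_eq_succ_of_ne_zero (by rintro rfl; omega)
  exact isLeast_norm_sub_SeoSum k (by omega)
end
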